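/- arXiv:1412.8016 — 6 statements merged into one kernel-verified Lean document; each statement's English description precedes it below -/
import Mathlib

section
/- Let G and K be bounded linear operators on a Hilbert space H, with G self-adjoint positive definite and K self-adjoint positive semidefinite. Then the operator I + GK is invertible with bounded inverse. -/
open scoped RealInnerProductSpace

section Aux

variable {H : Type*} [NormedAddCommGroup H] [InnerProductSpace ℝ H] [CompleteSpace H]

lemma coercive_isUnit (T : H →L[ℝ] H) (c : ℝ) (hc : 0 < c)
    (h : ∀ x : H, c * ‖x‖ ^ 2 ≤ ⟪T x, x⟫) : IsUnit T := by
  set B : H →L[ℝ] H →L[ℝ] ℝ := (innerSL ℝ).comp T with hBdef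
  have hB : IsCoercive B := by
    refine ⟨c, hc, fun u => ?_⟩
    have := h u
    simpa [hBdef, sq, mul_assoc] using this
  set E := hB.continuousLinearEquivOfBilin with hE
  have hTE : (E : H →L[ℝ] H) = T := by
    ext v
    exact (hB.unique_continuousLinearEquivOfBilin (fun w => rfl)).symm
  refine ⟨⟨T, (E.symm : H →L[ℝ] H), ?_, ?_⟩, rfl⟩
  · ext x
    simp [← hTE, ContinuousLinearMap.mul_apply]
  · ext x
    simp [← hTE, ContinuousLinearMap.mul_apply]

end Aux

/-- If `G` is bounded, self-adjoint and positive definite and `K` is bounded,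
self-adjoint and positive semi-definite on a Hilbert space, then `I + G K` is
invertible with bounded inverse. -/
theorem stmt1 {H : Type*} [NormedAddCommGroup H] [InnerProductSpace ℝ H] [CompleteSpace H]
    (G K : H →L[ℝ] H) (hGsa : IsSelfAdjoint G) (hKsa : IsSelfAdjoint K)
    (c : ℝ) (hc : 0 < c) (hG : ∀ x : H, c * ‖x‖ ^ 2 ≤ ⟪G x, x⟫)
    (hK : ∀ x : H, 0 ≤ ⟪K x, x⟫) :
    IsUnit (1 + G.comp K) := by
  have hGu : IsUnit G := coercive_isUnit G c hc hG
  obtain ⟨u, hu⟩ := hGu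
  set Ginv : H →L[ℝ] H := (↑u⁻¹ : H →L[ℝ] H) with hGinv
  have hGG : G * Ginv = 1 := by rw [hGinv, ← hu]; exact_mod_cast u.mul_inv
  -- coercivity of Ginv + K
  set c' : ℝ := c / (‖G‖ + 1) ^ 2 with hc'
  have hnormG : (0:ℝ) < ‖G‖ + 1 := by positivity
  have hc'pos : 0 < c' := by positivity
  have hcoer : ∀ x : H, c' * ‖x‖ ^ 2 ≤ ⟪(Ginv + K) x, x⟫ := by
    intro x
    have hy : G (Ginv x) = x := by
      have := congrArg (fun f : H →L[ℝ] H => f x) hGG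
      simpa [ContinuousLinearMap.mul_apply] using this
    set y := Ginv x with hydef
    have h1 : ⟪Ginv x, x⟫ = ⟪G y, y⟫ := by
      nth_rewrite 2 [← hy]
      exact real_inner_comm (G y) y
    have h2 : c * ‖y‖ ^ 2 ≤ ⟪Ginv x, x⟫ := by rw [h1]; exact hG y
    have hxy : ‖x‖ ≤ (‖G‖ + 1) * ‖y‖ := by
      calc ‖x‖ = ‖G y‖ := by rw [hy]
        _ ≤ ‖G‖ * ‖y‖ := G.le_opNorm y
        _ ≤ (‖G‖ + 1) * ‖y‖ := by nlinarith [norm_nonneg y]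
    have h3 : c' * ‖x‖ ^ 2 ≤ c * ‖y‖ ^ 2 := by
      rw [hc', div_mul_eq_mul_div, div_le_iff₀ (by positivity)]
      have : ‖x‖ ^ 2 ≤ ((‖G‖ + 1) * ‖y‖) ^ 2 := by
        apply pow_le_pow_left₀ (norm_nonneg x) hxy
      nlinarith [norm_nonneg x, norm_nonneg y]
    calc c' * ‖x‖ ^ 2 ≤ c * ‖y‖ ^ 2 := h3
      _ ≤ ⟪Ginv x, x⟫ := h2
      _ ≤ ⟪Ginv x, x⟫ + ⟪K x, x⟫ := le_add_of_nonneg_right (hK x)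
      _ = ⟪(Ginv + K) x, x⟫ := by
          simp [ContinuousLinearMap.add_apply, inner_add_left]
  have hSu : IsUnit (Ginv + K) := coercive_isUnit _ c' hc'pos hcoer
  have hfact : 1 + G.comp K = G * (Ginv + K) := by
    rw [mul_add, hGG]
    rfl
  rw [hfact]
  exact (hu ▸ u.isUnit).mul hSu
end

section
/- Suppose C₁ and C₂ are compact, self-adjoint, positive definite operators on a Hilbert space H with the same eigenvalues ρ_j² but possibly different orthonormal eigenbases, C₁e_j = ρ_j²e_j and C₂φ_j = ρ_j²φ_j. If I − C₁^{-1/2} C₂ C₁^{-1/2} extends to a Hilbert–Schmidt operator, then there exists K > 0 such that for every n and every unit vector h in span{φ₁, …, φ_n}, one has ‖C₁^{-1/2} h‖² ≤ K / ρ_n². -/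
/-!
`T = I - B` is the bounded extension of `C₁^{-1/2} C₂ C₁^{-1/2}`, and it is a positive operator
because `C₂` is one and `C₁^{1/2}` has dense range. Given a unit vector `h ∈ span {φ_0, …, φ_n}`,
put `g = C₂⁻¹ h` and `w = C₁^{1/2} g`, so that `T w = C₁^{-1/2} h`. The Cauchy–Schwarz inequality
for the positive form `⟪T ·, ·⟫` gives `‖T w‖² ≤ ‖T‖ ⟪T w, w⟫ = ‖T‖ ⟪h, C₂⁻¹ h⟫ ≤ ‖T‖ / ρ_n²`.
-/

open scoped RealInnerProductSpace

section

variable {ι E : Type*} [NormedAddCommGroup E] [InnerProductSpace ℝ E]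

namespace ContinuousLinearMap

theorem isPositive_of_dense {T : E →L[ℝ] E} {s : Set E} (hs : Dense s)
    (hsymm : ∀ x ∈ s, ∀ y ∈ s, ⟪T x, y⟫ = ⟪x, T y⟫) (hpos : ∀ x ∈ s, 0 ≤ ⟪T x, x⟫) :
    T.IsPositive := by
  refine ⟨fun x y => ?_, fun x => ?_⟩
  · refine hs.induction (P := fun x => ∀ y, ⟪T x, y⟫ = ⟪x, T y⟫) (fun x hx y => ?_) ?_ x y
    · exact hs.induction (P := fun y => ⟪T x, y⟫ = ⟪x, T y⟫) (hsymm x hx)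
        (isClosed_eq (by fun_prop) (by fun_prop)) y
    · simp only [Set.ofPred_forall]
      exact isClosed_iInter fun y => isClosed_eq (by fun_prop) (by fun_prop)
  · exact hs.induction (P := fun x => 0 ≤ ⟪T x, x⟫) hpos
      (isClosed_le continuous_const (by fun_prop)) x

theorem IsPositive.inner_sq_le {T : E →L[ℝ] E} (hT : T.IsPositive) (x y : E) :
    ⟪T x, y⟫ ^ 2 ≤ ⟪T x, x⟫ * ⟪T y, y⟫ := by
  have hquad : ∀ t : ℝ, 0 ≤ ⟪T y, y⟫ * (t * t) + 2 * ⟪T x, y⟫ * t + ⟪T x, x⟫ := fun t => by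
    have hyx : ⟪T y, x⟫ = ⟪T x, y⟫ := by rw [hT.inner_left_eq_inner_right, real_inner_comm]
    have hpos := hT.inner_nonneg_left (x + t • y)
    simp only [map_add, map_smul, inner_add_left, inner_add_right, real_inner_smul_left,
      real_inner_smul_right, hyx] at hpos
    linarith
  have hdisc := discrim_le_zero hquad
  rw [discrim] at hdisc
  linarith

theorem IsPositive.norm_apply_sq_le {T : E →L[ℝ] E} (hT : T.IsPositive) (x : E) :
    ‖T x‖ ^ 2 ≤ ‖T‖ * ⟪T x, x⟫ := by
  have hcs := hT.inner_sq_le x (T x)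
  have hbound : ⟪T (T x), T x⟫ ≤ ‖T‖ * ‖T x‖ ^ 2 :=
    (real_inner_le_norm _ _).trans <| by
      rw [sq, ← mul_assoc]; gcongr; exact T.le_opNorm _
  rw [real_inner_self_eq_norm_sq] at hcs
  rcases (norm_nonneg (T x)).eq_or_lt with h0 | hpos
  · rw [← h0]
    simpa using mul_nonneg (norm_nonneg T) (hT.inner_nonneg_left x)
  · have h4 := hcs.trans (mul_le_mul_of_nonneg_left hbound (hT.inner_nonneg_left x))
    nlinarith [pow_pos hpos 2]

end ContinuousLinearMap

theorem Orthonormal.exists_apply_eq_of_mem_span {F : Type*} [FunLike F E E]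
    [LinearMapClass F ℝ E E] {v : ι → E} (hv : Orthonormal ℝ v) {A : F} {μ : ι → ℝ}
    (hA : ∀ i, A (v i) = μ i • v i) {s : Finset ι} {m : ℝ}
    (hm : 0 < m) (hμ : ∀ i ∈ s, m ≤ μ i) {h : E} (hh : h ∈ Submodule.span ℝ (v '' s)) :
    ∃ g, A g = h ∧ m * ⟪h, g⟫ ≤ ‖h‖ ^ 2 := by
  obtain ⟨c, rfl⟩ := (Submodule.mem_span_image_finset_iff_exists_fun' ℝ).mp hh
  have hμ0 : ∀ i ∈ s, μ i ≠ 0 := fun i hi => (hm.trans_le (hμ i hi)).ne'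
  refine ⟨∑ i ∈ s, (c i / μ i) • v i, ?_, ?_⟩
  · simp only [map_sum, map_smul, hA, smul_smul]
    exact Finset.sum_congr rfl fun i hi => by rw [div_mul_cancel₀ _ (hμ0 i hi)]
  · rw [← real_inner_self_eq_norm_sq, hv.inner_sum, hv.inner_sum, Finset.mul_sum]
    refine Finset.sum_le_sum fun i hi => ?_
    simp only [conj_trivial]
    rw [mul_div_assoc', mul_div_assoc']
    exact div_le_of_le_mul₀ (hm.le.trans (hμ i hi)) (mul_self_nonneg _)
      (by nlinarith [hμ i hi, mul_self_nonneg (c i)])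

namespace HilbertBasis

variable (b : HilbertBasis ι ℝ E)

theorem hasSum_inner_apply_of_apply_eq_smul {A : E →L[ℝ] E} {μ : ι → ℝ}
    (hA : ∀ i, A (b i) = μ i • b i) (x y : E) :
    HasSum (fun i => μ i * (⟪b i, x⟫ * ⟪b i, y⟫)) ⟪A x, y⟫ := by
  have h := (b.hasSum_repr x).mapL (innerSL ℝ y ∘L A)
  simp only [ContinuousLinearMap.coe_comp, Function.comp_apply, map_smul, hA,
    innerSL_apply_apply, b.repr_apply_apply] at h
  rw [← real_inner_comm (A x) y]
  refine h.congr_fun fun i => ?_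
  rw [smul_eq_mul, smul_eq_mul, real_inner_comm y]
  ring

theorem isPositive_of_apply_eq_smul {A : E →L[ℝ] E} {μ : ι → ℝ} (hμ : ∀ i, 0 ≤ μ i)
    (hA : ∀ i, A (b i) = μ i • b i) : A.IsPositive := by
  refine ⟨fun x y => ?_, fun x => ?_⟩
  · change ⟪A x, y⟫ = ⟪x, A y⟫
    rw [real_inner_comm (A y) x]
    refine (b.hasSum_inner_apply_of_apply_eq_smul hA x y).unique ?_
    simpa only [mul_comm ⟪b _, y⟫] using b.hasSum_inner_apply_of_apply_eq_smul hA y x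
  · exact (b.hasSum_inner_apply_of_apply_eq_smul hA x x).nonneg
      fun i => mul_nonneg (hμ i) (mul_self_nonneg _)

/-- The diagonal operator `x ↦ ∑ i, σ i ⟪b i, x⟫ • b i` of a bounded sequence `σ`. -/
noncomputable def diagonal (σ : ι → ℝ) {C : ℝ} (hσ : ∀ i, |σ i| ≤ C) : E →ₗ[ℝ] E :=
  b.repr.symm.toLinearMap ∘ₗ
    ({ toFun := fun f => ⟨σ * ⇑f, f.property.norm.const_smul C |>.mono fun i => by
        simpa [abs_mul] using mul_le_mul_of_nonneg_right (hσ i) (abs_nonneg (f i))⟩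
       map_add' := fun f g => lp.ext (mul_add σ f g)
       map_smul' := fun c f => lp.ext (mul_left_comm σ (fun _ => c) f) } :
      lp (fun _ : ι => ℝ) 2 →ₗ[ℝ] lp (fun _ : ι => ℝ) 2) ∘ₗ
    b.repr.toLinearMap

variable {σ : ι → ℝ} {C : ℝ}

theorem inner_diagonal (hσ : ∀ i, |σ i| ≤ C) (x : E) (k : ι) :
    ⟪b k, b.diagonal σ hσ x⟫ = σ k * ⟪b k, x⟫ := by
  simp [diagonal, ← b.repr_apply_apply]

theorem dense_range_diagonal (hσ : ∀ i, |σ i| ≤ C) (hσ0 : ∀ i, σ i ≠ 0) :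
    Dense (Set.range (b.diagonal σ hσ)) := by
  classical
  have hspan : Submodule.span ℝ (Set.range b) ≤ LinearMap.range (b.diagonal σ hσ) := by
    refine Submodule.span_le.mpr ?_
    rintro _ ⟨i, rfl⟩
    refine ⟨(σ i)⁻¹ • b i, b.repr.injective <| lp.ext <| funext fun k => ?_⟩
    rw [b.repr_apply_apply, b.repr_apply_apply, map_smul, real_inner_smul_right,
      b.inner_diagonal hσ, orthonormal_iff_ite.mp b.orthonormal]
    split_ifs with hki
    · rw [hki, mul_one, inv_mul_cancel₀ (hσ0 i)]
    · simp
  exact (Submodule.dense_iff_topologicalClosure_eq_top.mpr b.dense_span).mono hspan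

variable [CompleteSpace E] {T A : E →L[ℝ] E}

/-- `hTA` says that `T = D⁻¹ A D⁻¹` for the diagonal operator `D = diag σ`, and `hw` that
`w = D u`; so `T w = D⁻¹ A u`. -/
theorem inner_apply_of_inner_eq_mul (hσ0 : ∀ i, σ i ≠ 0)
    (hTA : ∀ j k, ⟪T (b j), b k⟫ = (σ j)⁻¹ * (σ k)⁻¹ * ⟪A (b j), b k⟫) {u w : E}
    (hw : ∀ k, ⟪b k, w⟫ = σ k * ⟪b k, u⟫) (k : ι) :
    ⟪b k, T w⟫ = (σ k)⁻¹ * ⟪b k, A u⟫ := by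
  open ContinuousLinearMap in
  calc ⟪b k, T w⟫ = ∑' j, ⟪adjoint T (b k), b j⟫ * ⟪b j, w⟫ := by
        rw [b.tsum_inner_mul_inner, adjoint_inner_left]
    _ = ∑' j, (σ k)⁻¹ * (⟪u, b j⟫ * ⟪b j, adjoint A (b k)⟫) := tsum_congr fun j => by
        rw [adjoint_inner_left, adjoint_inner_right, real_inner_comm (T (b j)), hTA, hw,
          real_inner_comm u]
        field_simp [hσ0 j]
    _ = (σ k)⁻¹ * ⟪b k, A u⟫ := by
        rw [tsum_mul_left, b.tsum_inner_mul_inner, adjoint_inner_right, real_inner_comm]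

theorem inner_apply_eq_inner_apply_of_inner_eq_mul (hσ0 : ∀ i, σ i ≠ 0)
    (hTA : ∀ j k, ⟪T (b j), b k⟫ = (σ j)⁻¹ * (σ k)⁻¹ * ⟪A (b j), b k⟫) {u u' w w' : E}
    (hw : ∀ k, ⟪b k, w⟫ = σ k * ⟪b k, u⟫) (hw' : ∀ k, ⟪b k, w'⟫ = σ k * ⟪b k, u'⟫) :
    ⟪T w, w'⟫ = ⟪A u, u'⟫ := by
  rw [← b.tsum_inner_mul_inner, ← b.tsum_inner_mul_inner]
  refine tsum_congr fun k => ?_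
  rw [real_inner_comm, b.inner_apply_of_inner_eq_mul hσ0 hTA hw, hw', real_inner_comm (A u)]
  field_simp [hσ0 k]

theorem isPositive_of_inner_apply_eq (hσ : ∀ i, |σ i| ≤ C) (hσ0 : ∀ i, σ i ≠ 0)
    (hA : A.IsPositive) (hTA : ∀ j k, ⟪T (b j), b k⟫ = (σ j)⁻¹ * (σ k)⁻¹ * ⟪A (b j), b k⟫) :
    T.IsPositive := by
  have hD := b.inner_diagonal hσ
  have hTD : ∀ u u', ⟪T (b.diagonal σ hσ u), b.diagonal σ hσ u'⟫ = ⟪A u, u'⟫ := fun u u' =>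
    b.inner_apply_eq_inner_apply_of_inner_eq_mul hσ0 hTA (hD u) (hD u')
  refine ContinuousLinearMap.isPositive_of_dense (b.dense_range_diagonal hσ hσ0) ?_ ?_
  · rintro _ ⟨u, rfl⟩ _ ⟨u', rfl⟩
    rw [hTD, real_inner_comm (T _), hTD, hA.inner_left_eq_inner_right, real_inner_comm]
  · rintro _ ⟨u, rfl⟩
    rw [hTD]
    exact hA.inner_nonneg_left u

end HilbertBasis

end

theorem stmt6_general {H : Type*} [NormedAddCommGroup H] [InnerProductSpace ℝ H] [CompleteSpace H]
    (e φ : HilbertBasis ℕ ℝ H) (ρ : ℕ → ℝ) (hρpos : ∀ j, 0 < ρ j)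
    (hρmono : Antitone ρ)
    (C₂ : H →L[ℝ] H)
    (hC₂ : ∀ j, C₂ (φ j) = (ρ j ^ 2) • φ j)
    (B : H →L[ℝ] H)
    (hB : ∀ j k, ⟪B (e j), e k⟫ =
      (if j = k then (1 : ℝ) else 0) - (ρ j)⁻¹ * (ρ k)⁻¹ * ⟪C₂ (e j), e k⟫) :
    ∃ K > (0 : ℝ), ∀ n : ℕ, ∀ h ∈ Submodule.span ℝ (φ '' Set.Iic n), ‖h‖ = 1 →
      ∑' j, (⟪h, e j⟫ / ρ j) ^ 2 ≤ K / ρ n ^ 2 := by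
  have hρ0 : ∀ j, ρ j ≠ 0 := fun j => (hρpos j).ne'
  have hρle : ∀ j, |ρ j| ≤ ρ 0 := fun j => (abs_of_pos (hρpos j)).trans_le (hρmono j.zero_le)
  set T := 1 - B
  have hTC₂ : ∀ j k, ⟪T (e j), e k⟫ = (ρ j)⁻¹ * (ρ k)⁻¹ * ⟪C₂ (e j), e k⟫ := fun j k => by
    simp [T, inner_sub_left, hB, orthonormal_iff_ite.mp e.orthonormal]
  have hT : T.IsPositive := e.isPositive_of_inner_apply_eq hρle hρ0
    (φ.isPositive_of_apply_eq_smul (fun j => sq_nonneg _) hC₂) hTC₂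
  refine ⟨‖T‖ + 1, by positivity, fun n h hh hnorm => ?_⟩
  obtain ⟨g, hgh, hhg⟩ := φ.orthonormal.exists_apply_eq_of_mem_span hC₂ (s := Finset.Iic n)
    (pow_pos (hρpos n) 2)
    (fun i hi => pow_le_pow_left₀ (hρpos n).le (hρmono (Finset.mem_Iic.mp hi)) 2)
    (by rwa [Finset.coe_Iic])
  -- `w = C₁^{1/2} C₂⁻¹ h`, so that `T w = C₁^{-1/2} h`
  set w := e.diagonal ρ hρle g
  have hw := e.inner_diagonal hρle g
  have hTw : ∀ k, ⟪e k, T w⟫ = ⟪h, e k⟫ / ρ k := fun k => by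
    rw [e.inner_apply_of_inner_eq_mul hρ0 hTC₂ hw, hgh, real_inner_comm (e k) h, inv_mul_eq_div]
  calc ∑' j, (⟪h, e j⟫ / ρ j) ^ 2 = ‖T w‖ ^ 2 := by
        rw [← real_inner_self_eq_norm_sq, ← e.tsum_inner_mul_inner]
        exact tsum_congr fun j => by rw [real_inner_comm (e j) (T w), hTw]; ring
    _ ≤ ‖T‖ * ⟪T w, w⟫ := hT.norm_apply_sq_le w
    _ = ‖T‖ * ⟪h, g⟫ := by rw [e.inner_apply_eq_inner_apply_of_inner_eq_mul hρ0 hTC₂ hw hw, hgh]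
    _ ≤ ‖T‖ * (1 / ρ n ^ 2) := by
        gcongr
        rw [le_div_iff₀ (pow_pos (hρpos n) 2), mul_comm]
        simpa [hnorm] using hhg
    _ ≤ (‖T‖ + 1) / ρ n ^ 2 := by
        rw [mul_one_div]
        gcongr
        linarith

/-- If `C₁ e_j = ρ_j² e_j` and `C₂ φ_j = ρ_j² φ_j` have the same (decreasing, null)
eigenvalues in two different orthonormal bases, and `I − C₁^{-1/2} C₂ C₁^{-1/2}`
extends to a Hilbert–Schmidt operator `B` (specified by its matrix entries in the
basis `e`), then there is `K > 0` such that every unit vector `h` in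
`span{φ_0, …, φ_n}` satisfies `‖C₁^{-1/2} h‖² = ∑_j (⟨h, e_j⟩/ρ_j)² ≤ K / ρ_n²`. -/
theorem stmt6 {H : Type*} [NormedAddCommGroup H] [InnerProductSpace ℝ H] [CompleteSpace H]
    (e φ : HilbertBasis ℕ ℝ H) (ρ : ℕ → ℝ) (hρpos : ∀ j, 0 < ρ j)
    (hρmono : Antitone ρ) (hρ0 : Filter.Tendsto ρ Filter.atTop (nhds 0))
    (C₁ C₂ : H →L[ℝ] H)
    (hC₁ : ∀ j, C₁ (e j) = (ρ j ^ 2) • e j)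
    (hC₂ : ∀ j, C₂ (φ j) = (ρ j ^ 2) • φ j)
    (B : H →L[ℝ] H)
    (hB : ∀ j k, ⟪B (e j), e k⟫ =
      (if j = k then (1 : ℝ) else 0) - (ρ j)⁻¹ * (ρ k)⁻¹ * ⟪C₂ (e j), e k⟫)
    (hHS : Summable fun j => ‖B (e j)‖ ^ 2) :
    ∃ K > (0 : ℝ), ∀ n : ℕ, ∀ h ∈ Submodule.span ℝ (φ '' Set.Iic n), ‖h‖ = 1 →
      ∑' j, (⟪h, e j⟫ / ρ j) ^ 2 ≤ K / ρ n ^ 2 :=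
  stmt6_general e φ ρ hρpos hρmono C₂ hC₂ B hB
end

section
/- Let H be a separable Hilbert space with orthonormal basis {e_i}, let λ_i > 0 be a summable sequence, and let G₁ be the trace-class operator with G₁e_i = λ_i e_i. Let v = Σ v_i e_i be a unit vector with Σ_j (v_j/λ_j)² < ∞, let U(x) = x − 2⟨x, v⟩v be the reflection through the hyperplane orthogonal to v, and let R = U G₁ U. Then the operator A = 2 G₁^{-1/2} S G₁^{1/2}, where S(x) = ⟨x, v⟩v, is Hilbert–Schmidt, with squared Hilbert–Schmidt norm equal to 4 (Σ_i λ_i² v_i²)(Σ_j v_j²/λ_j²); consequently I − G₁^{-1/2} R G₁^{-1/2} = A + A^T − A A^T is Hilbert–Schmidt. -/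
open scoped RealInnerProductSpace

/-- Reflection example: with `G₁` diagonal (eigenvalues `λ_i`, summable), `v` a unit
vector with `∑ (v_j/λ_j)² < ∞`, and `A = 2 G₁^{-1/2} S G₁^{1/2}` (given by its matrix
entries `⟪A e_i, e_j⟫ = 2 λ_i v_i (v_j / λ_j)`), the operator `A` is Hilbert–Schmidt
with squared Hilbert–Schmidt norm `4 (∑ λ_i² v_i²) (∑ v_j²/λ_j²)`; consequently
`I − G₁^{-1/2} R G₁^{-1/2} = A + Aᵀ − A Aᵀ` is Hilbert–Schmidt as well. -/
theorem stmt7 {H : Type*} [NormedAddCommGroup H] [InnerProductSpace ℝ H] [CompleteSpace H]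
    (e : HilbertBasis ℕ ℝ H)
    (lam : ℕ → ℝ) (hlam : ∀ i, 0 < lam i) (hlamsum : Summable lam)
    (v : ℕ → ℝ) (hvs : Summable fun i => v i ^ 2) (hv : ∑' i, v i ^ 2 = 1)
    (hv2 : Summable fun j => (v j / lam j) ^ 2)
    (A : H →L[ℝ] H)
    (hA : ∀ i j, ⟪A (e i), e j⟫ = 2 * lam i * v i * (v j / lam j)) :
    (Summable fun i => ‖A (e i)‖ ^ 2) ∧
    (∑' i, ‖A (e i)‖ ^ 2 =
      4 * (∑' i, (lam i * v i) ^ 2) * (∑' j, (v j / lam j) ^ 2)) ∧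
    (Summable fun i =>
      ‖(A + ContinuousLinearMap.adjoint A - A.comp (ContinuousLinearMap.adjoint A))
        (e i)‖ ^ 2) := by
  set A' := ContinuousLinearMap.adjoint A with hA'def
  -- bound on lam
  have hC : ∀ i, lam i ≤ ∑' j, lam j := fun i =>
    Summable.le_tsum hlamsum i (fun j _ => (hlam j).le)
  set C := ∑' j, lam j with hCdef
  have hC0 : 0 ≤ C := tsum_nonneg fun j => (hlam j).le
  -- summability of (lam i * v i)^2
  have hS1sum : Summable fun i => (lam i * v i) ^ 2 := by
    apply Summable.of_nonneg_of_le (fun i => sq_nonneg _) (fun i => ?_)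
      (hvs.mul_left (C ^ 2))
    have h1 : (lam i * v i) ^ 2 = lam i ^ 2 * v i ^ 2 := by ring
    rw [h1]
    exact mul_le_mul_of_nonneg_right
      (pow_le_pow_left₀ (hlam i).le (hC i) 2) (sq_nonneg _)
  set S1 := ∑' i, (lam i * v i) ^ 2 with hS1def
  set S2 := ∑' j, (v j / lam j) ^ 2 with hS2def
  -- norm computation for A
  have hAnorm : ∀ i, ‖A (e i)‖ ^ 2 = 4 * (lam i * v i) ^ 2 * S2 := by
    intro i
    rw [← real_inner_self_eq_norm_sq, ← e.tsum_inner_mul_inner (A (e i)) (A (e i))]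
    have h : ∀ j, ⟪A (e i), e j⟫ * ⟪e j, A (e i)⟫
        = 4 * (lam i * v i) ^ 2 * (v j / lam j) ^ 2 := by
      intro j
      have h2 : ⟪e j, A (e i)⟫ = 2 * lam i * v i * (v j / lam j) :=
        (real_inner_comm _ _).trans (hA i j)
      rw [hA i j, h2]; ring
    simp_rw [h]
    rw [tsum_mul_left]
  -- adjoint matrix entries
  have hA'entry : ∀ i j, ⟪A' (e i), e j⟫ = 2 * lam j * v j * (v i / lam i) := by
    intro i j
    rw [hA'def, ContinuousLinearMap.adjoint_inner_left, real_inner_comm, hA j i]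
  have hA'norm : ∀ i, ‖A' (e i)‖ ^ 2 = 4 * (v i / lam i) ^ 2 * S1 := by
    intro i
    rw [← real_inner_self_eq_norm_sq, ← e.tsum_inner_mul_inner (A' (e i)) (A' (e i))]
    have h : ∀ j, ⟪A' (e i), e j⟫ * ⟪e j, A' (e i)⟫
        = 4 * (v i / lam i) ^ 2 * (lam j * v j) ^ 2 := by
      intro j
      have h2 : ⟪e j, A' (e i)⟫ = 2 * lam j * v j * (v i / lam i) :=
        (real_inner_comm _ _).trans (hA'entry i j)
      rw [hA'entry i j, h2]; ring
    simp_rw [h]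
    rw [tsum_mul_left]
  have hAsum : Summable fun i => ‖A (e i)‖ ^ 2 := by
    simp_rw [hAnorm]
    exact (hS1sum.mul_left 4).mul_right S2
  have hA'sum : Summable fun i => ‖A' (e i)‖ ^ 2 := by
    simp_rw [hA'norm]
    exact (hv2.mul_left 4).mul_right S1
  refine ⟨hAsum, ?_, ?_⟩
  · calc ∑' i, ‖A (e i)‖ ^ 2 = ∑' i, 4 * (lam i * v i) ^ 2 * S2 := by
          simp_rw [hAnorm]
      _ = (∑' i, 4 * (lam i * v i) ^ 2) * S2 := tsum_mul_right
      _ = 4 * S1 * S2 := by rw [tsum_mul_left]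
  · -- Hilbert–Schmidt for A + A' - A ∘ A'
    apply Summable.of_nonneg_of_le (fun i => sq_nonneg _) (fun i => ?_)
      (((hAsum.add hA'sum).add (hA'sum.mul_left (‖A‖ ^ 2))).mul_left 3)
    have hle : ‖(A + A' - A.comp A') (e i)‖ ≤ ‖A (e i)‖ + ‖A' (e i)‖ + ‖A‖ * ‖A' (e i)‖ := by
      have h1 : (A + A' - A.comp A') (e i) = A (e i) + A' (e i) - A (A' (e i)) := by
        simp
      rw [h1]
      calc ‖A (e i) + A' (e i) - A (A' (e i))‖
          ≤ ‖A (e i) + A' (e i)‖ + ‖A (A' (e i))‖ := norm_sub_le _ _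
        _ ≤ ‖A (e i)‖ + ‖A' (e i)‖ + ‖A (A' (e i))‖ := by
            gcongr; exact norm_add_le _ _
        _ ≤ ‖A (e i)‖ + ‖A' (e i)‖ + ‖A‖ * ‖A' (e i)‖ := by
            gcongr; exact A.le_opNorm _
    have h0 : (0:ℝ) ≤ ‖A (e i)‖ + ‖A' (e i)‖ + ‖A‖ * ‖A' (e i)‖ := by positivity
    nlinarith [sq_nonneg (‖A (e i)‖ - ‖A' (e i)‖), sq_nonneg (‖A (e i)‖ - ‖A‖ * ‖A' (e i)‖),
      sq_nonneg (‖A' (e i)‖ - ‖A‖ * ‖A' (e i)‖), norm_nonneg ((A + A' - A.comp A') (e i)),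
      mul_self_nonneg ‖A‖]
end

section
/- Positivity and finiteness of the Bayesian normalizing constant: Let (H₁, μ₀) be a probability space, and for each u ∈ H₁ and y, let Φ(y, u) be measurable such that for each fixed u the probability measures Q_u and Q₀ on the data space satisfy dQ_u/dQ₀(y) = exp(−Φ(y, u)) with Q_u and Q₀ mutually absolutely continuous. Then for Q₀-almost every y, the normalizing constant Z^y = ∫_{H₁} exp(−Φ(y, u)) dμ₀(u) satisfies 0 < Z^y < ∞. -/
open MeasureTheory ENNReal

/-- Positivity and finiteness of the Bayesian normalizing constant: if each data
distribution `Q u` is equivalent to the reference measure `Q₀` with density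
`exp(−Φ(y,u))`, then for `Q₀`-almost every `y` the normalizing constant
`Z^y = ∫ exp(−Φ(y,u)) dμ₀(u)` satisfies `0 < Z^y < ∞`. -/
theorem stmt8 {H₁ Y : Type*} [MeasurableSpace H₁] [MeasurableSpace Y]
    (μ₀ : Measure H₁) [IsProbabilityMeasure μ₀]
    (Q₀ : Measure Y) [IsProbabilityMeasure Q₀]
    (Q : H₁ → Measure Y) [∀ u, IsProbabilityMeasure (Q u)]
    (Φ : Y → H₁ → ℝ) (hΦ : Measurable (Function.uncurry Φ))
    (hdens : ∀ u : H₁, ∀ s : Set Y, MeasurableSet s →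
      Q u s = ∫⁻ y in s, ENNReal.ofReal (Real.exp (-(Φ y u))) ∂Q₀)
    (hac : ∀ u : H₁, Q u ≪ Q₀ ∧ Q₀ ≪ Q u) :
    ∀ᵐ y ∂Q₀,
      0 < ∫⁻ u, ENNReal.ofReal (Real.exp (-(Φ y u))) ∂μ₀ ∧
      ∫⁻ u, ENNReal.ofReal (Real.exp (-(Φ y u))) ∂μ₀ < ⊤ := by
  set g : Y → H₁ → ℝ≥0∞ := fun y u => ENNReal.ofReal (Real.exp (-(Φ y u))) with hg
  have hgm : Measurable (Function.uncurry g) := by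
    apply Measurable.ennreal_ofReal
    exact (hΦ.neg).exp
  set f : Y → ℝ≥0∞ := fun y => ∫⁻ u, g y u ∂μ₀ with hf
  have hfm : Measurable f := hgm.lintegral_prod_right
  -- finiteness
  have hswap : ∀ (ν : Measure Y), SFinite ν →
      ∫⁻ y, ∫⁻ u, g y u ∂μ₀ ∂ν = ∫⁻ u, ∫⁻ y, g y u ∂ν ∂μ₀ := by
    intro ν hν
    exact lintegral_lintegral_swap hgm.aemeasurable
  have htot : ∫⁻ y, f y ∂Q₀ = 1 := by
    rw [hswap Q₀ inferInstance]
    have : ∀ u, ∫⁻ y, g y u ∂Q₀ = 1 := by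
      intro u
      have := hdens u Set.univ MeasurableSet.univ
      rw [setLIntegral_univ] at this
      rw [← this]
      simp
    simp [this]
  have hfin : ∀ᵐ y ∂Q₀, f y < ⊤ := ae_lt_top hfm (by rw [htot]; exact one_ne_top)
  -- positivity
  set S : Set Y := {y | f y = 0} with hS
  have hSm : MeasurableSet S := hfm (measurableSet_singleton 0)
  have hzero : ∫⁻ u, Q u S ∂μ₀ = 0 := by
    have h1 : ∫⁻ y in S, f y ∂Q₀ = 0 := by
      rw [setLIntegral_eq_zero_iff hSm hfm]
      filter_upwards with y hy using hy
    have h2 : ∫⁻ u, ∫⁻ y in S, g y u ∂Q₀ ∂μ₀ = 0 := by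
      rw [← hswap (Q₀.restrict S) inferInstance]
      exact h1
    calc ∫⁻ u, Q u S ∂μ₀ = ∫⁻ u, ∫⁻ y in S, g y u ∂Q₀ ∂μ₀ := by
          congr 1; ext u; exact hdens u S hSm
      _ = 0 := h2
  have hQS : ∀ᵐ u ∂μ₀, Q u S = 0 := by
    have hm : Measurable fun u => Q u S := by
      have : (fun u => Q u S) = fun u => ∫⁻ y in S, g y u ∂Q₀ := by
        ext u; exact hdens u S hSm
      rw [this]
      exact Measurable.lintegral_prod_left hgm
    rw [lintegral_eq_zero_iff hm] at hzero
    exact hzero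
  obtain ⟨u, hu⟩ := hQS.exists
  have hQ₀S : Q₀ S = 0 := (hac u).2 hu
  have hnm : ∀ᵐ y ∂Q₀, y ∉ S := (ae_iff).mpr (by simpa using hQ₀S)
  filter_upwards [hfin, hnm] with y h1 h2
  refine ⟨?_, h1⟩
  simpa [hS, pos_iff_ne_zero] using h2
end

section
/- Upper bound on the finite-dimensional posterior tail: Under the assumptions of the previous lemma, the posterior mass μ_n^{G(u₀)}{u : ‖u − u₀‖ > ξ/2} := [∫_{‖u−u₀‖>ξ/2} e^{−(n/2)‖G(u)−G(u₀)‖_ζ²} dμ₀] / [∫_{ℝ^p} e^{−(n/2)‖G(u)−G(u₀)‖_ζ²} dμ₀] is at most exp(−(n/2)(ξ/2K₃)²) / [exp(−(n/2)(ξ/4K₃)²)·F·(ξ/(4K₃K₄))^s] = exp(−(3n/32K₃²)ξ²) · F^{-1} (4K₃K₄/ξ)^s. In particular, with ξ_n = √((log n)/n) this tends to 0 as n → ∞. -/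
open MeasureTheory

/-! The weight `exp (-(n/2) N(G u - G u₀)²)` is at most `exp (-(n/2) (ξ/(2K₃))²)` where
`‖u - u₀‖ > ξ/2`, because `‖u - u₀‖ ≤ K₃ N(G u - G u₀)`; so the numerator is bounded by this value
times a probability. It is at least `exp (-(n/2) (ξ/(4K₃))²)` on the ball of radius `ξ/(4K₃K₄)`
around `u₀`, because `N(G u - G u₀) ≤ K₄ ‖u - u₀‖`; so the denominator is at least this value times
the prior mass `F (ξ/(4K₃K₄))ˢ` of that ball. -/

lemma Real.exp_neg_mul_sq_le_of_abs_le {c s t : ℝ} (hc : 0 ≤ c) (h : |s| ≤ |t|) :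
    Real.exp (-c * t ^ 2) ≤ Real.exp (-c * s ^ 2) := by
  have := sq_le_sq.mpr h
  rw [Real.exp_le_exp]
  nlinarith

section GaussianWeight

variable {α : Type*} [MeasurableSpace α] {μ : Measure α} {φ : α → ℝ} {c : ℝ}

lemma setIntegral_exp_neg_mul_sq_le [IsProbabilityMeasure μ] {S : Set α} {a : ℝ}
    (hc : 0 ≤ c) (ha : 0 ≤ a) (hS : ∀ u ∈ S, a ≤ φ u) :
    ∫ u in S, Real.exp (-c * φ u ^ 2) ∂μ ≤ Real.exp (-c * a ^ 2) := by
  have hbound : ∀ u ∈ S, ‖Real.exp (-c * φ u ^ 2)‖ ≤ Real.exp (-c * a ^ 2) := fun u hu => by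
    rw [Real.norm_of_nonneg (Real.exp_pos _).le]
    exact Real.exp_neg_mul_sq_le_of_abs_le hc
      (by rw [abs_of_nonneg ha]; exact (hS u hu).trans (le_abs_self _))
  calc ∫ u in S, Real.exp (-c * φ u ^ 2) ∂μ
      ≤ ‖∫ u in S, Real.exp (-c * φ u ^ 2) ∂μ‖ := Real.le_norm_self _
    _ ≤ Real.exp (-c * a ^ 2) * μ.real S :=
        norm_setIntegral_le_of_norm_le_const (measure_lt_top μ S) hbound
    _ ≤ Real.exp (-c * a ^ 2) :=
        mul_le_of_le_one_right (Real.exp_pos _).le measureReal_le_one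

lemma integrable_exp_neg_mul_sq_comp [IsFiniteMeasure μ] (hc : 0 ≤ c)
    (hφ : AEStronglyMeasurable φ μ) : Integrable (fun u => Real.exp (-c * φ u ^ 2)) μ := by
  refine .of_bound (by fun_prop) 1 (.of_forall fun u => ?_)
  rw [Real.norm_of_nonneg (Real.exp_pos _).le]
  simpa using Real.exp_neg_mul_sq_le_of_abs_le hc (s := 0) (t := φ u) (by simp)

lemma measureReal_mul_exp_neg_mul_sq_le_integral [IsFiniteMeasure μ] {B : Set α} {b : ℝ}
    (hc : 0 ≤ c) (hφ : AEStronglyMeasurable φ μ) (hB : ∀ u ∈ B, |φ u| ≤ b) :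
    μ.real B * Real.exp (-c * b ^ 2) ≤ ∫ u, Real.exp (-c * φ u ^ 2) ∂μ := by
  have hsub : B ⊆ {u | Real.exp (-c * b ^ 2) ≤ Real.exp (-c * φ u ^ 2)} := fun u hu =>
    Real.exp_neg_mul_sq_le_of_abs_le hc ((hB u hu).trans (le_abs_self b))
  calc μ.real B * Real.exp (-c * b ^ 2)
      ≤ μ.real {u | Real.exp (-c * b ^ 2) ≤ Real.exp (-c * φ u ^ 2)} * Real.exp (-c * b ^ 2) :=
        mul_le_mul_of_nonneg_right (measureReal_mono hsub) (Real.exp_pos _).le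
    _ ≤ ∫ u, Real.exp (-c * φ u ^ 2) ∂μ := by
        rw [mul_comm]
        exact mul_meas_ge_le_integral_of_nonneg (.of_forall fun u => (Real.exp_pos _).le)
          (integrable_exp_neg_mul_sq_comp hc hφ) _

end GaussianWeight

theorem stmt15_general {p q : ℕ}
    (G : EuclideanSpace ℝ (Fin p) →ₗ[ℝ] EuclideanSpace ℝ (Fin q))
    (N : EuclideanSpace ℝ (Fin q) → ℝ) (hNc : Continuous N)
    (μ₀ : Measure (EuclideanSpace ℝ (Fin p))) [IsProbabilityMeasure μ₀]
    (u₀ : EuclideanSpace ℝ (Fin p))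
    (K₃ K₄ F s r₀ : ℝ) (hK₃ : 0 < K₃) (hK₄ : 0 < K₄) (hF : 0 < F)
    (hLip₃ : ∀ u : EuclideanSpace ℝ (Fin p), ‖u‖ ≤ K₃ * N (G u))
    (hLip₄ : ∀ u : EuclideanSpace ℝ (Fin p), N (G u) ≤ K₄ * ‖u‖)
    (hsb : ∀ r : ℝ, 0 < r → r ≤ r₀ →
      F * r ^ s ≤ (μ₀ {u | ‖u - u₀‖ ≤ r}).toReal)
    (n : ℕ) (ξ : ℝ) (hξ : 0 < ξ) (hξr : ξ / (4 * K₃ * K₄) ≤ r₀) :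
    (∫ u in {u | ξ / 2 < ‖u - u₀‖},
        Real.exp (-((n : ℝ) / 2) * (N (G u - G u₀)) ^ 2) ∂μ₀) /
      (∫ u, Real.exp (-((n : ℝ) / 2) * (N (G u - G u₀)) ^ 2) ∂μ₀) ≤
    Real.exp (-((n : ℝ) / 2) * (ξ / (2 * K₃)) ^ 2) /
      (Real.exp (-((n : ℝ) / 2) * (ξ / (4 * K₃)) ^ 2) * F * (ξ / (4 * K₃ * K₄)) ^ s) := by
  have hc : (0 : ℝ) ≤ n / 2 := by positivity
  have hφ : Continuous fun u => N (G u - G u₀) :=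
    hNc.comp (G.continuous_of_finiteDimensional.sub continuous_const)
  have hfar : ∀ u ∈ {u | ξ / 2 < ‖u - u₀‖}, ξ / (2 * K₃) ≤ N (G u - G u₀) := by
    intro u (hu : ξ / 2 < ‖u - u₀‖)
    rw [div_le_iff₀ (by positivity), ← map_sub]
    linarith [hLip₃ (u - u₀)]
  have hnear : ∀ u ∈ {u | ‖u - u₀‖ ≤ ξ / (4 * K₃ * K₄)}, |N (G u - G u₀)| ≤ ξ / (4 * K₃) := by
    intro u (hu : ‖u - u₀‖ ≤ ξ / (4 * K₃ * K₄))
    rw [← map_sub, abs_of_nonneg (nonneg_of_mul_nonneg_right ((norm_nonneg _).trans (hLip₃ _)) hK₃)]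
    calc N (G (u - u₀)) ≤ K₄ * ‖u - u₀‖ := hLip₄ _
      _ ≤ K₄ * (ξ / (4 * K₃ * K₄)) := by gcongr
      _ = ξ / (4 * K₃) := by field_simp
  have hnum := setIntegral_exp_neg_mul_sq_le (μ := μ₀) hc (by positivity) hfar
  have hden := measureReal_mul_exp_neg_mul_sq_le_integral (μ := μ₀) hc hφ.aestronglyMeasurable hnear
  have hprior := hsb _ (by positivity) hξr
  refine div_le_div₀ (Real.exp_pos _).le hnum (by positivity) (le_trans ?_ hden)
  rw [mul_assoc, mul_comm]
  exact mul_le_mul_of_nonneg_right hprior (Real.exp_pos _).le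

/-- Upper bound on the finite-dimensional posterior tail: under the Lipschitz bounds
`‖u‖ ≤ K₃ N(G u)` and `N(G u) ≤ K₄ ‖u‖` and the small-ball condition for the prior,
the posterior mass of `{‖u − u₀‖ > ξ/2}` is at most
`exp(−(n/2)(ξ/(2K₃))²) / (exp(−(n/2)(ξ/(4K₃))²) F (ξ/(4K₃K₄))ˢ)`. -/
theorem stmt15 {p q : ℕ} (hpq : p ≤ q)
    (G : EuclideanSpace ℝ (Fin p) →ₗ[ℝ] EuclideanSpace ℝ (Fin q))
    (hGinj : Function.Injective G)
    (N : EuclideanSpace ℝ (Fin q) → ℝ) (hNc : Continuous N) (hN0 : ∀ x, 0 ≤ N x)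
    (μ₀ : Measure (EuclideanSpace ℝ (Fin p))) [IsProbabilityMeasure μ₀]
    (u₀ : EuclideanSpace ℝ (Fin p))
    (K₃ K₄ F s r₀ : ℝ) (hK₃ : 0 < K₃) (hK₄ : 0 < K₄) (hF : 0 < F) (hs : 0 < s)
    (hr₀ : 0 < r₀)
    (hLip₃ : ∀ u : EuclideanSpace ℝ (Fin p), ‖u‖ ≤ K₃ * N (G u))
    (hLip₄ : ∀ u : EuclideanSpace ℝ (Fin p), N (G u) ≤ K₄ * ‖u‖)
    (hsb : ∀ r : ℝ, 0 < r → r ≤ r₀ →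
      F * r ^ s ≤ (μ₀ {u | ‖u - u₀‖ ≤ r}).toReal)
    (n : ℕ) (ξ : ℝ) (hξ : 0 < ξ) (hξr : ξ / (4 * K₃ * K₄) ≤ r₀) :
    (∫ u in {u | ξ / 2 < ‖u - u₀‖},
        Real.exp (-((n : ℝ) / 2) * (N (G u - G u₀)) ^ 2) ∂μ₀) /
      (∫ u, Real.exp (-((n : ℝ) / 2) * (N (G u - G u₀)) ^ 2) ∂μ₀) ≤
    Real.exp (-((n : ℝ) / 2) * (ξ / (2 * K₃)) ^ 2) /
      (Real.exp (-((n : ℝ) / 2) * (ξ / (4 * K₃)) ^ 2) * F * (ξ / (4 * K₃ * K₄)) ^ s) :=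
  stmt15_general G N hNc μ₀ u₀ K₃ K₄ F s r₀ hK₃ hK₄ hF hLip₃ hLip₄ hsb n ξ hξ hξr
end

section
/- Meyer-wavelet bound on the inverse operator norm: Suppose {e_k} and {φ_j} are orthonormal bases of a Hilbert space H₁ with ⟨φ_j, e_k⟩ = 0 whenever k ∉ [j/3 − 1, 2j], and suppose G : H₁ → H₂ is linear injective with G^T G e_k = ρ_k² e_k and ρ_k ≥ C(1 + k²)^{-α/2} for all k. Then g_n := max over unit vectors h ∈ span{φ₁,…,φ_n} of ‖(G^{-1})^T h‖² satisfies g_n ≤ C' (2n)^{2α} for some constant C' depending only on C and α. -/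
open scoped RealInnerProductSpace

/-!
Only the coefficients `⟪h, e k⟫` with `k < 2n` can be nonzero: for `j < n` the band
condition kills `⟪φ j, e k⟫` once `k + 1 > 2 (j + 1)`. On those indices the mild
ill-posedness gives `ρ_k⁻² ≤ C⁻² (1 + (k + 1)²)^α ≤ 2^α C⁻² (2n)^{2α}`, and Parseval
`∑ ⟪h, e k⟫² = ‖h‖² = 1` turns this pointwise bound into the bound on the sum.
-/

lemma inner_eq_zero_of_mem_span {E : Type*} [NormedAddCommGroup E] [InnerProductSpace ℝ E]
    {s : Set E} {v h : E} (hs : ∀ x ∈ s, ⟪x, v⟫ = 0) (hh : h ∈ Submodule.span ℝ s) :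
    ⟪h, v⟫ = 0 :=
  Submodule.mem_orthogonal_singleton_iff_inner_left.1 <|
    Submodule.span_le.2 (fun x hx => Submodule.mem_orthogonal_singleton_iff_inner_left.2 (hs x hx))
      hh

lemma HilbertBasis.hasSum_inner_sq {ι E : Type*} [NormedAddCommGroup E] [InnerProductSpace ℝ E]
    (b : HilbertBasis ι ℝ E) (x : E) : HasSum (fun i => ⟪x, b i⟫ ^ 2) (‖x‖ ^ 2) := by
  have h := b.hasSum_inner_mul_inner x x
  simp only [real_inner_comm x, ← sq, real_inner_self_eq_norm_sq] at h
  exact h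

lemma tsum_div_sq_le_of_hasSum {ι : Type*} {c ρ : ι → ℝ} {s M : ℝ}
    (hc : HasSum (fun i => c i ^ 2) s) (hρ : ∀ i, c i ≠ 0 → (ρ i ^ 2)⁻¹ ≤ M) :
    ∑' i, (c i / ρ i) ^ 2 ≤ M * s := by
  have hterm : ∀ i, (c i / ρ i) ^ 2 ≤ M * c i ^ 2 := fun i => by
    by_cases hci : c i = 0
    · simp [hci]
    · rw [div_pow, div_eq_mul_inv, mul_comm M]
      exact mul_le_mul_of_nonneg_left (hρ i hci) (sq_nonneg _)
  have hsum := (hc.mul_left M).summable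
  exact ((hsum.of_nonneg_of_le (fun i => sq_nonneg _) hterm).tsum_le_tsum hterm hsum).trans_eq
    (hc.mul_left M).tsum_eq

lemma inv_sq_le_of_mul_rpow_le {ρ Cc α x N : ℝ} (hα : 0 ≤ α) (hCc : 0 < Cc) (hx : 1 ≤ x)
    (hxN : x ≤ N) (hρ : Cc * (1 + x ^ 2) ^ (-(α / 2)) ≤ ρ) :
    (ρ ^ 2)⁻¹ ≤ 2 ^ α / Cc ^ 2 * N ^ (2 * α) := by
  have hb : 0 < 1 + x ^ 2 := by positivity
  have hlow : 0 < Cc * (1 + x ^ 2) ^ (-(α / 2)) := by positivity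
  calc (ρ ^ 2)⁻¹ ≤ ((Cc * (1 + x ^ 2) ^ (-(α / 2))) ^ 2)⁻¹ :=
        inv_anti₀ (by positivity) (pow_le_pow_left₀ hlow.le hρ 2)
    _ = (1 + x ^ 2) ^ α / Cc ^ 2 := by
        rw [mul_pow, ← Real.rpow_mul_natCast hb.le, show -(α / 2) * ((2 : ℕ) : ℝ) = -α by
          push_cast; ring, Real.rpow_neg hb.le, mul_inv, inv_inv, div_eq_mul_inv, mul_comm]
    _ ≤ (2 * N ^ 2) ^ α / Cc ^ 2 := by gcongr; nlinarith
    _ = 2 ^ α / Cc ^ 2 * N ^ (2 * α) := by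
        rw [Real.mul_rpow (by norm_num) (by positivity), ← Real.rpow_natCast N 2,
          ← Real.rpow_mul (by linarith)]
        push_cast
        ring

theorem stmt17_general {H₁ : Type*} [NormedAddCommGroup H₁] [InnerProductSpace ℝ H₁]
    (e φ : HilbertBasis ℕ ℝ H₁)
    (ρ : ℕ → ℝ)
    (α Cc : ℝ) (hα : 0 < α) (hCc : 0 < Cc)
    (hmild : ∀ k : ℕ, Cc * (1 + ((k : ℝ) + 1) ^ 2) ^ (-(α / 2)) ≤ ρ k)
    (hband : ∀ j k : ℕ,
      ((k : ℝ) + 1 < ((j : ℝ) + 1) / 3 - 1 ∨ 2 * ((j : ℝ) + 1) < (k : ℝ) + 1) →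
      ⟪φ j, e k⟫ = 0) :
    ∃ C' > (0 : ℝ), ∀ n : ℕ, ∀ h ∈ Submodule.span ℝ (φ '' Set.Iio n), ‖h‖ = 1 →
      ∑' k, (⟪h, e k⟫ / ρ k) ^ 2 ≤ C' * (2 * (n : ℝ)) ^ (2 * α) := by
  refine ⟨2 ^ α / Cc ^ 2, by positivity, fun n h hh hnorm => ?_⟩
  have hsupport : ∀ k, ⟪h, e k⟫ ≠ 0 → (k : ℝ) + 1 ≤ 2 * n := fun k hk => by
    by_contra! hkn
    refine hk (inner_eq_zero_of_mem_span ?_ hh)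
    rintro _ ⟨j, hj, rfl⟩
    refine hband j k (Or.inr (lt_of_le_of_lt ?_ hkn))
    have : j + 1 ≤ n := hj
    exact_mod_cast Nat.mul_le_mul_left 2 this
  have hparseval := e.hasSum_inner_sq h
  rw [hnorm, one_pow] at hparseval
  simpa only [mul_one] using tsum_div_sq_le_of_hasSum hparseval fun k hk =>
    inv_sq_le_of_mul_rpow_le hα.le hCc (by simp) (hsupport k hk) (hmild k)

/-- Meyer-wavelet bound on the inverse operator norm: if `⟪G e_k, G e_l⟫ = ρ_k² δ_{kl}`
with `ρ_k ≥ C (1 + k²)^{-α/2}` (mildly ill-posed), and the basis `φ` satisfies the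
band condition `⟪φ_j, e_k⟫ = 0` for `k ∉ [j/3 − 1, 2j]` (1-based indices), then
`g_n = max {‖(G⁻¹)ᵀ h‖² = ∑_k (⟨h, e_k⟩/ρ_k)² : h ∈ span{φ_1,…,φ_n}, ‖h‖ = 1}`
satisfies `g_n ≤ C' (2n)^{2α}` for some constant `C' > 0` depending only on `C, α`. -/
theorem stmt17 {H₁ H₂ : Type*} [NormedAddCommGroup H₁] [InnerProductSpace ℝ H₁]
    [CompleteSpace H₁] [NormedAddCommGroup H₂] [InnerProductSpace ℝ H₂]
    (e φ : HilbertBasis ℕ ℝ H₁)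
    (G : H₁ →ₗ[ℝ] H₂) (hGinj : Function.Injective G)
    (ρ : ℕ → ℝ) (hρpos : ∀ k, 0 < ρ k)
    (heig : ∀ k l, ⟪G (e k), G (e l)⟫ = if k = l then ρ k ^ 2 else 0)
    (α Cc : ℝ) (hα : 0 < α) (hCc : 0 < Cc)
    (hmild : ∀ k : ℕ, Cc * (1 + ((k : ℝ) + 1) ^ 2) ^ (-(α / 2)) ≤ ρ k)
    (hband : ∀ j k : ℕ,
      ((k : ℝ) + 1 < ((j : ℝ) + 1) / 3 - 1 ∨ 2 * ((j : ℝ) + 1) < (k : ℝ) + 1) →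
      ⟪φ j, e k⟫ = 0) :
    ∃ C' > (0 : ℝ), ∀ n : ℕ, ∀ h ∈ Submodule.span ℝ (φ '' Set.Iio n), ‖h‖ = 1 →
      ∑' k, (⟪h, e k⟫ / ρ k) ^ 2 ≤ C' * (2 * (n : ℝ)) ^ (2 * α) :=
  stmt17_general e φ ρ α Cc hα hCc hmild hband
end
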